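/- Let k ≥ 2 and n ≥ k+1. If A ⊆ 2^[n] is a family of cyclic intervals (A ⊆ I(n)) with no induced copy of Y_k and no induced copy of Y_k', and C is an ascending chain with |C ∩ A| ≥ k+1, and the descending chain C' containing min(C ∩ A) satisfies |{Z ∈ C' ∩ A : |Z| < |min(C ∩ A)|}| ≥ k−1, then for each of the sets C^2, ..., C^{r+1} (the 2nd through (r+1)-st smallest elements of C ∩ A, where |C ∩ A| = k + r), the descending chain crossing C at that set meets A in exactly one set. -/

import Mathlib

open Fin.NatCast

/-- The family `A ⊆ 2^[n]` contains an induced copy of the poset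
`Y_k`: `x_1 < x_2 < … < x_k < y, z` with `y, z` incomparable. -/
def hasInducedY (n k : ℕ) (A : Finset (Finset (Fin n))) : Prop :=
  ∃ x : Fin k → Finset (Fin n), ∃ y z : Finset (Fin n),
    (∀ i, x i ∈ A) ∧ y ∈ A ∧ z ∈ A ∧
    (∀ i j : Fin k, i < j → x i ⊂ x j) ∧
    (∀ i, x i ⊂ y) ∧ (∀ i, x i ⊂ z) ∧
    ¬ y ⊆ z ∧ ¬ z ⊆ y

/-- The family `A ⊆ 2^[n]` contains an induced copy of the dual poset
`Y_k'`: `y, z < x_k < … < x_1` with `y, z` incomparable. -/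
def hasInducedY' (n k : ℕ) (A : Finset (Finset (Fin n))) : Prop :=
  ∃ x : Fin k → Finset (Fin n), ∃ y z : Finset (Fin n),
    (∀ i, x i ∈ A) ∧ y ∈ A ∧ z ∈ A ∧
    (∀ i j : Fin k, i < j → x j ⊂ x i) ∧
    (∀ i, y ⊂ x i) ∧ (∀ i, z ⊂ x i) ∧
    ¬ y ⊆ z ∧ ¬ z ⊆ y

/-- The cyclic interval `{a, a+1, …, a+r-1}` (arithmetic mod `n`) of the
cyclically arranged ground set `Fin n`. -/
def cycInt (n : ℕ) (a : Fin n) (r : ℕ) : Finset (Fin n) :=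
  haveI : NeZero n := ⟨(Fin.pos a).ne'⟩
  (Finset.range r).image (fun j : ℕ => a + (j : Fin n))

/-- `I(n)`: the family of nonempty proper cyclic intervals of `Fin n`. -/
def cyclicIntervals (n : ℕ) : Finset (Finset (Fin n)) :=
  (Finset.univ ×ˢ Finset.Icc 1 (n - 1)).image (fun p : Fin n × ℕ => cycInt n p.1 p.2)

/-- The ascending chain `{{i},{i,i+1},…,{i,…,i+n-2}}` of cyclic intervals starting at `i`. -/
def ascChain (n : ℕ) (i : Fin n) : Finset (Finset (Fin n)) :=
  (Finset.Icc 1 (n - 1)).image (fun r => cycInt n i r)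

/-- The descending chain `{{i},{i-1,i},…,{i-n+2,…,i}}` of cyclic intervals ending at `i`. -/
def descChain (n : ℕ) (i : Fin n) : Finset (Finset (Fin n)) :=
  haveI : NeZero n := ⟨(Fin.pos i).ne'⟩
  (Finset.Icc 1 (n - 1)).image (fun r => cycInt n (i - ((r - 1 : ℕ) : Fin n)) r)

set_option linter.unusedSectionVars false

open Fin.CommRing

lemma exists_chain_fun {α : Type*} [DecidableEq α] (S : Finset (Finset α)) (k : ℕ)
    (hcard : k ≤ S.card)
    (hcomp : ∀ a ∈ S, ∀ b ∈ S, a ≠ b → a ⊂ b ∨ b ⊂ a) :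
    ∃ x : Fin k → Finset α, (∀ i, x i ∈ S) ∧ (∀ i j : Fin k, i < j → x i ⊂ x j) := by
  have hinj : Set.InjOn Finset.card (S : Set (Finset α)) := by
    intro a ha b hb hab
    by_contra hne
    rcases hcomp a ha b hb hne with h | h
    · exact absurd hab (Finset.card_lt_card h).ne
    · exact absurd hab.symm (Finset.card_lt_card h).ne
  have hT : k ≤ (S.image Finset.card).card := by
    rwa [Finset.card_image_of_injOn hinj]
  obtain ⟨V, hVsub, hVcard⟩ := Finset.exists_subset_card_eq hT
  have hmem : ∀ t : Fin k, V.orderEmbOfFin hVcard t ∈ S.image Finset.card :=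
    fun t => hVsub (V.orderEmbOfFin_mem hVcard t)
  choose g hg hgcard using fun t => Finset.mem_image.mp (hmem t)
  refine ⟨g, hg, fun a b hab => ?_⟩
  have hlt : (g a).card < (g b).card := by
    rw [hgcard a, hgcard b]
    exact (V.orderEmbOfFin hVcard).strictMono hab
  rcases hcomp _ (hg a) _ (hg b) (fun he => by rw [he] at hlt; omega) with h | h
  · exact h
  · exact absurd hlt (by have := Finset.card_lt_card h; omega)

section helpers
variable {n : ℕ} [NeZero n]

lemma fin_sub_val (a b : Fin n) : (a - b).val = (n - b.val + a.val) % n := by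
  rw [Fin.sub_def]

lemma fin_add_val (a b : Fin n) : (a + b).val = (a.val + b.val) % n := by
  rw [Fin.add_def]

lemma mem_cycInt_iff {l : ℕ} (hl : l ≤ n) (a x : Fin n) :
    x ∈ cycInt n a l ↔ (x - a).val < l := by
  unfold cycInt
  simp only [Finset.mem_image, Finset.mem_range]
  constructor
  · rintro ⟨m, hm, rfl⟩
    have h1 : a + (m : Fin n) - a = (m : Fin n) := by ring
    rw [h1, Fin.val_natCast, Nat.mod_eq_of_lt (lt_of_lt_of_le hm hl)]
    exact hm
  · intro h
    exact ⟨(x - a).val, h, by rw [Fin.cast_val_eq_self]; ring⟩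

lemma card_cycInt {l : ℕ} (hl : l ≤ n) (a : Fin n) : (cycInt n a l).card = l := by
  unfold cycInt
  rw [Finset.card_image_of_injOn, Finset.card_range]
  intro m1 h1 m2 h2 he
  simp only [Finset.coe_range, Set.mem_Iio] at h1 h2
  have h3 : (m1 : Fin n) = (m2 : Fin n) := by exact_mod_cast add_left_cancel he
  have h4 := congrArg Fin.val h3
  rw [Fin.val_natCast, Fin.val_natCast, Nat.mod_eq_of_lt (lt_of_lt_of_le h1 hl),
    Nat.mod_eq_of_lt (lt_of_lt_of_le h2 hl)] at h4
  exact h4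

lemma cycInt_subset {l1 l2 : ℕ} (h : l1 ≤ l2) (a : Fin n) :
    cycInt n a l1 ⊆ cycInt n a l2 := by
  unfold cycInt
  exact Finset.image_subset_image (Finset.range_subset_range.mpr h)

lemma mem_descInt_iff {l : ℕ} (hl1 : 1 ≤ l) (hl : l ≤ n) (j x : Fin n) :
    x ∈ cycInt n (j - ((l - 1 : ℕ) : Fin n)) l ↔ (j - x).val < l := by
  rw [mem_cycInt_iff hl]
  have h1 : x - (j - ((l - 1 : ℕ) : Fin n)) = ((l - 1 : ℕ) : Fin n) - (j - x) := by ring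
  rw [h1, fin_sub_val, Fin.val_natCast]
  have he : (j - x).val < n := (j - x).isLt
  set e := (j - x).val with hee
  have hl1n : (l - 1) % n = l - 1 := Nat.mod_eq_of_lt (by omega)
  rw [hl1n]
  rcases le_or_gt e (l - 1) with hc | hc
  · have h2 : n - e + (l - 1) = n + (l - 1 - e) := by omega
    rw [h2, Nat.add_mod_left, Nat.mod_eq_of_lt (by omega)]
    omega
  · have h2 : n - e + (l - 1) < n := by omega
    rw [Nat.mod_eq_of_lt h2]
    omega

lemma descInt_subset {l1 l2 : ℕ} (hl1 : 1 ≤ l1) (h : l1 ≤ l2) (hl2 : l2 ≤ n) (j : Fin n) :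
    cycInt n (j - ((l1 - 1 : ℕ) : Fin n)) l1 ⊆ cycInt n (j - ((l2 - 1 : ℕ) : Fin n)) l2 := by
  intro x hx
  rw [mem_descInt_iff hl1 (by omega)] at hx
  rw [mem_descInt_iff (by omega) hl2]
  omega

lemma endpoint_eq {l : ℕ} (hl1 : 1 ≤ l) (hl : l ≤ n - 1) (hn2 : 2 ≤ n) (i j : Fin n)
    (h : cycInt n i l = cycInt n (j - ((l - 1 : ℕ) : Fin n)) l) : (j - i).val = l - 1 := by
  have hln : l ≤ n := by omega
  have hj : j ∈ cycInt n i l := by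
    rw [h, mem_descInt_iff hl1 hln]; simp; omega
  rw [mem_cycInt_iff hln] at hj
  set d := (j - i).val with hd
  by_contra hne
  have hdlt : d < l - 1 := by omega
  have hx : (i + ((d + 1 : ℕ) : Fin n)) ∈ cycInt n i l := by
    rw [mem_cycInt_iff hln]
    have h2 : i + ((d + 1 : ℕ) : Fin n) - i = ((d + 1 : ℕ) : Fin n) := by ring
    rw [h2, Fin.val_natCast, Nat.mod_eq_of_lt (by omega)]
    omega
  rw [h, mem_descInt_iff hl1 hln] at hx
  have h3 : j - (i + ((d + 1 : ℕ) : Fin n)) = (j - i) - ((d + 1 : ℕ) : Fin n) := by ring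
  rw [h3, fin_sub_val, Fin.val_natCast, Nat.mod_eq_of_lt (by omega : d + 1 < n), ← hd] at hx
  have h4 : n - (d + 1) + d = n - 1 := by omega
  rw [h4, Nat.mod_eq_of_lt (by omega)] at hx
  omega

lemma mem_ascChain_iff (i : Fin n) (X : Finset (Fin n)) :
    X ∈ ascChain n i ↔ ∃ l, 1 ≤ l ∧ l ≤ n - 1 ∧ X = cycInt n i l := by
  unfold ascChain
  simp only [Finset.mem_image, Finset.mem_Icc]
  constructor
  · rintro ⟨l, ⟨h1, h2⟩, rfl⟩; exact ⟨l, h1, h2, rfl⟩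
  · rintro ⟨l, h1, h2, rfl⟩; exact ⟨l, ⟨h1, h2⟩, rfl⟩

lemma mem_descChain_iff (j : Fin n) (X : Finset (Fin n)) :
    X ∈ descChain n j ↔ ∃ l, 1 ≤ l ∧ l ≤ n - 1 ∧ X = cycInt n (j - ((l - 1 : ℕ) : Fin n)) l := by
  unfold descChain
  simp only [Finset.mem_image, Finset.mem_Icc]
  constructor
  · rintro ⟨l, ⟨h1, h2⟩, rfl⟩; exact ⟨l, h1, h2, rfl⟩
  · rintro ⟨l, h1, h2, rfl⟩; exact ⟨l, ⟨h1, h2⟩, rfl⟩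

lemma ascChain_nested (hn2 : 2 ≤ n) {i : Fin n} {a b : Finset (Fin n)}
    (ha : a ∈ ascChain n i) (hb : b ∈ ascChain n i) (h : a.card ≤ b.card) : a ⊆ b := by
  rw [mem_ascChain_iff] at ha hb
  obtain ⟨la, ha1, ha2, rfl⟩ := ha
  obtain ⟨lb, hb1, hb2, rfl⟩ := hb
  rw [card_cycInt (by omega), card_cycInt (by omega)] at h
  exact cycInt_subset h i

lemma descChain_nested (hn2 : 2 ≤ n) {j : Fin n} {a b : Finset (Fin n)}
    (ha : a ∈ descChain n j) (hb : b ∈ descChain n j) (h : a.card ≤ b.card) : a ⊆ b := by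
  rw [mem_descChain_iff] at ha hb
  obtain ⟨la, ha1, ha2, rfl⟩ := ha
  obtain ⟨lb, hb1, hb2, rfl⟩ := hb
  rw [card_cycInt (by omega), card_cycInt (by omega)] at h
  exact descInt_subset ha1 h (by omega) j

lemma ascChain_comp (hn2 : 2 ≤ n) {i : Fin n} {a b : Finset (Fin n)}
    (ha : a ∈ ascChain n i) (hb : b ∈ ascChain n i) (hne : a ≠ b) : a ⊂ b ∨ b ⊂ a := by
  rcases le_total a.card b.card with h | h
  · exact Or.inl ((ascChain_nested hn2 ha hb h).ssubset_of_ne hne)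
  · exact Or.inr ((ascChain_nested hn2 hb ha h).ssubset_of_ne hne.symm)

lemma descChain_comp (hn2 : 2 ≤ n) {j : Fin n} {a b : Finset (Fin n)}
    (ha : a ∈ descChain n j) (hb : b ∈ descChain n j) (hne : a ≠ b) : a ⊂ b ∨ b ⊂ a := by
  rcases le_total a.card b.card with h | h
  · exact Or.inl ((descChain_nested hn2 ha hb h).ssubset_of_ne hne)
  · exact Or.inr ((descChain_nested hn2 hb ha h).ssubset_of_ne hne.symm)

end helpers

theorem stmt13 (n k r : ℕ) (hk : 2 ≤ k) (hn : k + 1 ≤ n) (hr : 1 ≤ r)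
    (A : Finset (Finset (Fin n))) (hAsub : A ⊆ cyclicIntervals n)
    (hY : ¬ hasInducedY n k A) (hY' : ¬ hasInducedY' n k A)
    (i : Fin n) (hlen : (ascChain n i ∩ A).card = k + r)
    (M : Finset (Fin n)) (hM : M ∈ ascChain n i ∩ A)
    (hMmin : ∀ X ∈ ascChain n i ∩ A, M ⊆ X)
    (j : Fin n) (hj : M ∈ descChain n j)
    (hpred : k - 1 ≤ ((descChain n j ∩ A).filter (fun Z => Z.card < M.card)).card) :
    ∀ X ∈ ascChain n i ∩ A,
      2 ≤ ((ascChain n i ∩ A).filter (fun Y => Y.card ≤ X.card)).card →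
      ((ascChain n i ∩ A).filter (fun Y => Y.card ≤ X.card)).card ≤ r + 1 →
      ∀ j' : Fin n, X ∈ descChain n j' → (descChain n j' ∩ A).card = 1 := by
  have hn2 : 2 ≤ n := by omega
  haveI : NeZero n := ⟨by omega⟩
  intro X hX hs2 hsr j' hXj'
  set T := ascChain n i ∩ A with hT
  set F := T.filter (fun Y => Y.card ≤ X.card) with hF
  have hXasc : X ∈ ascChain n i := (Finset.mem_inter.mp hX).1
  have hXA : X ∈ A := (Finset.mem_inter.mp hX).2
  have hMasc : M ∈ ascChain n i := (Finset.mem_inter.mp hM).1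
  have hMA : M ∈ A := (Finset.mem_inter.mp hM).2
  -- lengths
  obtain ⟨lX, hlX1, hlX2, hXeq⟩ := (mem_ascChain_iff i X).mp hXasc
  obtain ⟨lX', hlX'1, hlX'2, hXeq'⟩ := (mem_descChain_iff j' X).mp hXj'
  have hcardX : X.card = lX := by rw [hXeq]; exact card_cycInt (by omega) i
  have hcardX' : X.card = lX' := by rw [hXeq']; exact card_cycInt (by omega) _
  have hlXX' : lX' = lX := by omega
  rw [hlXX'] at hXeq'
  have hdval : (j' - i).val = lX - 1 :=
    endpoint_eq hlX1 hlX2 hn2 i j' (hXeq ▸ hXeq')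
  obtain ⟨lM, hlM1, hlM2, hMeq⟩ := (mem_ascChain_iff i M).mp hMasc
  have hcardM : M.card = lM := by rw [hMeq]; exact card_cycInt (by omega) i
  -- M ⊊ X
  have hMX : M ⊆ X := hMmin X hX
  have hMneX : M ≠ X := by
    intro he
    have hFsub : F ⊆ {M} := by
      intro Y hY2
      obtain ⟨hY3, hY4⟩ := Finset.mem_filter.mp hY2
      have h5 : M ⊆ Y := hMmin Y hY3
      have : M = Y := Finset.eq_of_subset_of_card_le h5 (by rw [← he] at hY4; exact hY4)
      simp [this.symm]
    have := Finset.card_le_card hFsub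
    simp at this
    omega
  have hMssX : M ⊂ X := hMX.ssubset_of_ne hMneX
  have hlMlX : lM < lX := by
    have := Finset.card_lt_card hMssX
    omega
  -- goal: descChain j' ∩ A = {X}
  have hgoal : descChain n j' ∩ A = {X} := by
    rw [Finset.eq_singleton_iff_unique_mem]
    refine ⟨Finset.mem_inter.mpr ⟨hXj', hXA⟩, ?_⟩
    intro Z hZ
    by_contra hZneX
    have hZdesc : Z ∈ descChain n j' := (Finset.mem_inter.mp hZ).1
    have hZA : Z ∈ A := (Finset.mem_inter.mp hZ).2
    obtain ⟨lZ, hlZ1, hlZ2, hZeq⟩ := (mem_descChain_iff j' Z).mp hZdesc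
    have hcardZ : Z.card = lZ := by rw [hZeq]; exact card_cycInt (by omega) _
    have hlZne : lZ ≠ lX := by
      intro he
      exact hZneX (by rw [hZeq, he, ← hXeq'])
    -- membership facts
    have hiM : i ∈ M := by
      rw [hMeq, mem_cycInt_iff (by omega : lM ≤ n)]
      simp; omega
    have hj'X : (j' - i).val < lX := by omega
    have hj'notM : j' ∉ M := by
      rw [hMeq, mem_cycInt_iff (by omega : lM ≤ n)]
      rw [hdval]; omega
    rcases lt_or_gt_of_ne hlZne with hcase | hcase
    · -- Case 1 : Z ⊊ X, use Y_k' with tops above X, y = Z, z = M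
      have hZX : Z ⊆ X := by
        rw [hZeq, hXeq']
        exact descInt_subset hlZ1 (by omega) (by omega) j'
      have hZssX : Z ⊂ X := hZX.ssubset_of_ne (by exact hZneX)
      have hj'Z : j' ∈ Z := by
        rw [hZeq, mem_descInt_iff hlZ1 (by omega)]
        simp; omega
      have hinotZ : i ∉ Z := by
        rw [hZeq, mem_descInt_iff hlZ1 (by omega), hdval]
        omega
      -- the k sets above
      set U := T.filter (fun Y => X.card ≤ Y.card) with hU
      have hXU : X ∈ U := Finset.mem_filter.mpr ⟨hX, le_refl _⟩
      have hins : insert X (T \ F) ⊆ U := by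
        intro Y hY2
        rcases Finset.mem_insert.mp hY2 with rfl | hY3
        · exact hXU
        · obtain ⟨hY4, hY5⟩ := Finset.mem_sdiff.mp hY3
          refine Finset.mem_filter.mpr ⟨hY4, ?_⟩
          by_contra h6
          exact hY5 (Finset.mem_filter.mpr ⟨hY4, by omega⟩)
      have hXnot : X ∉ T \ F := by
        simp only [Finset.mem_sdiff]
        intro ⟨_, h7⟩
        exact h7 (Finset.mem_filter.mpr ⟨hX, le_refl _⟩)
      have hcardsd : (T \ F).card = k + r - F.card := by
        rw [Finset.card_sdiff_of_subset (Finset.filter_subset _ _), hlen]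
      have hUk : k ≤ U.card := by
        have h8 := Finset.card_le_card hins
        rw [Finset.card_insert_of_notMem hXnot, hcardsd] at h8
        omega
      obtain ⟨g, hg1, hg2⟩ := exists_chain_fun U k hUk (by
        intro a ha b hb hne
        exact ascChain_comp hn2 (Finset.mem_inter.mp (Finset.mem_filter.mp ha).1).1
          (Finset.mem_inter.mp (Finset.mem_filter.mp hb).1).1 hne)
      have hXsub : ∀ t : Fin k, X ⊆ g t := by
        intro t
        have h9 := Finset.mem_filter.mp (hg1 t)
        exact ascChain_nested hn2 hXasc (Finset.mem_inter.mp h9.1).1 h9.2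
      refine hY' ⟨fun t => g t.rev, Z, M, ?_, hZA, hMA, ?_, ?_, ?_, ?_, ?_⟩
      · intro t
        exact (Finset.mem_inter.mp (Finset.mem_filter.mp (hg1 t.rev)).1).2
      · intro a b hab
        exact hg2 _ _ (by rwa [Fin.rev_lt_rev])
      · intro t
        exact hZssX.trans_subset (hXsub t.rev)
      · intro t
        exact hMssX.trans_subset (hXsub t.rev)
      · intro h10
        exact hj'notM (h10 hj'Z)
      · intro h10
        exact hinotZ (h10 hiM)
    · -- Case 2 : X ⊊ Z, use Y_k with chain below M, y = Z, z = C' ⊋ X in T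
      have hXZ : X ⊆ Z := by
        rw [hZeq, hXeq']
        exact descInt_subset hlX1 (by omega) (by omega) j'
      have hXssZ : X ⊂ Z := hXZ.ssubset_of_ne (fun he => hZneX he.symm)
      -- find C' ∈ T with X.card < C'.card
      have hC'ex : ∃ C' ∈ T, X.card < C'.card := by
        by_contra h10
        push_neg at h10
        have h11 : T ⊆ F := fun Y hY2 => Finset.mem_filter.mpr ⟨hY2, h10 Y hY2⟩
        have h12 := Finset.card_le_card h11
        omega
      obtain ⟨C', hC'T, hC'card⟩ := hC'ex
      have hC'asc : C' ∈ ascChain n i := (Finset.mem_inter.mp hC'T).1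
      have hC'A : C' ∈ A := (Finset.mem_inter.mp hC'T).2
      obtain ⟨lC, hlC1, hlC2, hCeq⟩ := (mem_ascChain_iff i C').mp hC'asc
      have hcardC : C'.card = lC := by rw [hCeq]; exact card_cycInt (by omega) i
      have hXC' : X ⊆ C' := ascChain_nested hn2 hXasc hC'asc (le_of_lt hC'card)
      have hXssC' : X ⊂ C' := hXC'.ssubset_of_ne (by
        intro he; rw [he] at hC'card; omega)
      -- the chain of k sets below M
      set W := (descChain n j ∩ A).filter (fun Z2 => Z2.card < M.card) with hW
      have hMnotW : M ∉ W := by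
        intro h10
        have := (Finset.mem_filter.mp h10).2
        omega
      set V := insert M W with hV
      have hVsub : V ⊆ descChain n j ∩ A := by
        intro Y hY2
        rcases Finset.mem_insert.mp hY2 with rfl | h10
        · exact Finset.mem_inter.mpr ⟨hj, hMA⟩
        · exact (Finset.mem_filter.mp h10).1
      have hVk : k ≤ V.card := by
        rw [hV, Finset.card_insert_of_notMem hMnotW]
        omega
      obtain ⟨g, hg1, hg2⟩ := exists_chain_fun V k hVk (by
        intro a ha b hb hne
        exact descChain_comp hn2 (Finset.mem_inter.mp (hVsub ha)).1
          (Finset.mem_inter.mp (hVsub hb)).1 hne)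
      have hgM : ∀ t : Fin k, g t ⊆ M := by
        intro t
        rcases Finset.mem_insert.mp (hg1 t) with he | h10
        · rw [he]
        · exact descChain_nested hn2 (Finset.mem_inter.mp (Finset.mem_filter.mp h10).1).1 hj
            (le_of_lt (Finset.mem_filter.mp h10).2)
      have hone : (1 : Fin n).val = 1 := by
        rw [Fin.val_one', Nat.mod_eq_of_lt (by omega)]
      -- witnesses for incomparability
      have hwZ : (i - 1 : Fin n) ∈ Z := by
        rw [hZeq, mem_descInt_iff hlZ1 (by omega)]
        have h10 : j' - (i - 1) = (j' - i) + 1 := by ring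
        rw [h10, fin_add_val, hdval, hone, Nat.mod_eq_of_lt (by omega)]
        omega
      have hwnotC : (i - 1 : Fin n) ∉ C' := by
        rw [hCeq, mem_cycInt_iff (by omega : lC ≤ n)]
        have h10 : (i - 1) - i = (0 : Fin n) - 1 := by ring
        rw [h10, fin_sub_val, hone, Fin.val_zero, Nat.add_zero,
          Nat.mod_eq_of_lt (by omega)]
        omega
      have hvC : (j' + 1 : Fin n) ∈ C' := by
        rw [hCeq, mem_cycInt_iff (by omega : lC ≤ n)]
        have h10 : (j' + 1) - i = (j' - i) + 1 := by ring
        rw [h10, fin_add_val, hdval, hone, Nat.mod_eq_of_lt (by omega)]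
        omega
      have hvnotZ : (j' + 1 : Fin n) ∉ Z := by
        rw [hZeq, mem_descInt_iff hlZ1 (by omega)]
        have h10 : j' - (j' + 1) = (0 : Fin n) - 1 := by ring
        rw [h10, fin_sub_val, hone, Fin.val_zero, Nat.add_zero,
          Nat.mod_eq_of_lt (by omega)]
        omega
      have hMssZ : M ⊂ Z := hMssX.trans_subset hXZ
      have hMssC' : M ⊂ C' := hMssX.trans_subset hXC'
      refine hY ⟨g, Z, C', ?_, hZA, hC'A, hg2, ?_, ?_, ?_, ?_⟩
      · intro t
        exact (Finset.mem_inter.mp (hVsub (hg1 t))).2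
      · intro t
        exact (hgM t).trans_ssubset hMssZ
      · intro t
        exact (hgM t).trans_ssubset hMssC'
      · intro h10
        exact hwnotC (h10 hwZ)
      · intro h10
        exact hvnotZ (h10 hvC)
  rw [hgoal]
  simp
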